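/- Let F : C → B and G : D → B be Galois coverings of k-categories, and let (H,J) be a morphism from F to G. Then for every k-linear functor H' : C → D with G ∘ H' = J ∘ F, there exists a unique g ∈ Aut₁G with H' = g ∘ H. In other words, the map g ↦ g ∘ H is a bijection from Aut₁G onto the set of k-linear functors H' : C → D satisfying G ∘ H' = J ∘ F. -/

import Mathlib

open CategoryTheory

universe w v u

section CoveringDefs

variable (k : Type w) [CommRing k]

/-- A functor between `k`-linear categories is `k`-linear:
it is additive and commutes with the scalar action on morphisms. -/
def IsLinearFunctor {C : Type u} [Category.{v} C] [Preadditive C] [CategoryTheory.Linear k C]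
    {B : Type u} [Category.{v} B] [Preadditive B] [CategoryTheory.Linear k B]
    (F : C ⥤ B) : Prop :=
  (∀ (x y : C) (f g : x ⟶ y), F.map (f + g) = F.map f + F.map g) ∧
  (∀ (x y : C) (r : k) (f : x ⟶ y), F.map (r • f) = r • F.map f)

variable {C : Type u} [Category.{v} C] [Preadditive C] [CategoryTheory.Linear k C]
variable {B : Type u} [Category.{v} B] [Preadditive B] [CategoryTheory.Linear k B]

/-- The canonical map `⊕_{y ∈ F⁻¹(c)} C(x,y) →+ B(F(x),c)` induced by `F`
on the source star. -/
noncomputable def starOutHom (F : C ⥤ B) (hF : IsLinearFunctor k F) (x : C) (c : B) :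
    (DirectSum {y : C // F.obj y = c} (fun y => (x ⟶ y.1))) →+ (F.obj x ⟶ c) := by
  classical
  exact DirectSum.toAddMonoid fun y =>
    AddMonoidHom.mk' (fun f => F.map f ≫ eqToHom y.2)
      (fun f g => by try simp only []
                     rw [hF.1 _ _ f g, Preadditive.add_comp])

/-- The canonical map `⊕_{y ∈ F⁻¹(c)} C(y,x) →+ B(c,F(x))` induced by `F`
on the target star. -/
noncomputable def starInHom (F : C ⥤ B) (hF : IsLinearFunctor k F) (x : C) (c : B) :
    (DirectSum {y : C // F.obj y = c} (fun y => (y.1 ⟶ x))) →+ (c ⟶ F.obj x) := by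
  classical
  exact DirectSum.toAddMonoid fun y =>
    AddMonoidHom.mk' (fun f => eqToHom y.2.symm ≫ F.map f)
      (fun f g => by try simp only []
                     rw [hF.1 _ _ f g, Preadditive.comp_add])

/-- `F : C ⥤ B` is a covering of `k`-categories: it is a `k`-linear functor,
surjective on objects, inducing bijections on all source and target stars. -/
def IsCovering (F : C ⥤ B) : Prop :=
  ∃ hF : IsLinearFunctor k F,
    Function.Surjective F.obj ∧
    (∀ (x : C) (c : B), Function.Bijective (starOutHom k F hF x c)) ∧
    (∀ (x : C) (c : B), Function.Bijective (starInHom k F hF x c))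

end CoveringDefs

/-- A `k`-category is connected if the equivalence relation generated by
"there is a nonzero morphism from `x` to `y`" relates any two objects. -/
def IsConnectedKCat (C : Type u) [Category.{v} C] [Preadditive C] : Prop :=
  ∀ x y : C, Relation.EqvGen (fun a b : C => ∃ f : a ⟶ b, f ≠ 0) x y

section GaloisDefs

variable (k : Type w) [CommRing k]
variable {C : Type u} [Category.{v} C] [Preadditive C] [CategoryTheory.Linear k C]
variable {B : Type u} [Category.{v} B] [Preadditive B] [CategoryTheory.Linear k B]
variable {D : Type u} [Category.{v} D] [Preadditive D] [CategoryTheory.Linear k D]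

/-- `H` belongs to `Aut₁ F`: it is an invertible `k`-linear endofunctor with `F ∘ H = F`. -/
def MemAut1 (F : C ⥤ B) (H : C ⥤ C) : Prop :=
  IsLinearFunctor k H ∧
  (∃ Hinv : C ⥤ C, H ⋙ Hinv = 𝟭 C ∧ Hinv ⋙ H = 𝟭 C) ∧
  H ⋙ F = F

/-- A covering is Galois if its source is connected and `Aut₁ F` acts transitively
on some fibre. -/
def IsGaloisCovering (F : C ⥤ B) : Prop :=
  IsCovering k F ∧ IsConnectedKCat C ∧
  ∃ b₀ : B, ∀ x y : C, F.obj x = b₀ → F.obj y = b₀ →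
    ∃ H : C ⥤ C, MemAut1 k F H ∧ H.obj x = y

/-- A morphism `(H, J)` of coverings from `F : C ⥤ B` to `G : D ⥤ B`:
`H` and `J` are `k`-linear, `J` is an isomorphism which is the identity on objects,
and `G ∘ H = J ∘ F`. -/
def IsCoveringMorphism (F : C ⥤ B) (G : D ⥤ B) (H : C ⥤ D) (J : B ⥤ B) : Prop :=
  IsLinearFunctor k H ∧ IsLinearFunctor k J ∧
  (∃ Jinv : B ⥤ B, J ⋙ Jinv = 𝟭 B ∧ Jinv ⋙ J = 𝟭 B) ∧
  (∀ b : B, J.obj b = b) ∧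
  H ⋙ G = F ⋙ J

end GaloisDefs

/-- A universal covering: a Galois covering `U` such that for every Galois covering
`F : C ⥤ B` and every pair of objects `u₀`, `c₀` above the same object of `B`,
there is a unique `k`-linear functor `H` with `F ∘ H = U` and `H u₀ = c₀`. -/
def IsUniversalCovering (k : Type w) [CommRing k]
    {U' : Type u} [Category.{v} U'] [Preadditive U'] [CategoryTheory.Linear k U']
    {B : Type u} [Category.{v} B] [Preadditive B] [CategoryTheory.Linear k B]
    (U : U' ⥤ B) : Prop :=
  IsGaloisCovering k U ∧
  ∀ (C : Type u) [Category.{v} C] [Preadditive C] [CategoryTheory.Linear k C]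
    (F : C ⥤ B), IsGaloisCovering k F →
    ∀ (u₀ : U') (c₀ : C), U.obj u₀ = F.obj c₀ →
      ∃! H : U' ⥤ C, IsLinearFunctor k H ∧ H ⋙ F = U ∧ H.obj u₀ = c₀

/-- Given a functor `F : C ⥤ B`, a choice `x` of objects of `C` above each object of `B`,
and an endofunctor `H` of `C`, the subset `Z_H(c,b) = F(C(x_b, H x_c))` of `B(b,c)`. -/
def gradeSet {C : Type u} [Category.{v} C] {B : Type u} [Category.{v} B]
    (F : C ⥤ B) (x : B → C) (H : C ⥤ C) (b c : B) : Set (b ⟶ c) :=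
  {g | ∃ (h₁ : b = F.obj (x b)) (h₂ : F.obj (H.obj (x c)) = c)
        (f : x b ⟶ H.obj (x c)), g = eqToHom h₁ ≫ F.map f ≫ eqToHom h₂}

/-- The homogeneous component `Z_H(c,b)` as a `k`-submodule of `B(b,c)`. -/
noncomputable def gradeSubmodule (k : Type w) [CommRing k]
    {C : Type u} [Category.{v} C]
    {B : Type u} [Category.{v} B] [Preadditive B] [CategoryTheory.Linear k B]
    (F : C ⥤ B) (x : B → C) (H : C ⥤ C) (b c : B) : Submodule k (b ⟶ c) :=
  Submodule.span k (gradeSet F x H b c)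

/-!
Lifts through a covering are rigid: a nonzero morphism of `D` is determined, together with its
endpoints, by its source (or target) and its image in `B`, because the star maps are injective.
Hence two lifts of the same functor out of a connected category that agree at one object and
kill no nonzero morphism coincide. Given `H'`, pick `x₀` over the base point `b₀`; `H x₀` and
`H' x₀` both lie over `b₀`, so transitivity yields `g ∈ Aut₁ G` with `g (H x₀) = H' x₀`, and
rigidity over `C` gives `H ⋙ g = H'`. Rigidity over `D` shows any other such `g'` equals `g`.
-/

section LinearFunctors

variable {k : Type w} [CommRing k]
variable {D : Type u} [Category.{v} D] [Preadditive D] [CategoryTheory.Linear k D]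
variable {B : Type u} [Category.{v} B] [Preadditive B] [CategoryTheory.Linear k B]

theorem IsLinearFunctor.map_zero {G : D ⥤ B} (hG : IsLinearFunctor k G) (x y : D) :
    G.map (0 : x ⟶ y) = 0 := by
  simpa using hG.2 x y 0 0

theorem IsLinearFunctor.map_ne_zero_of_comp_eq {E : Type*} [Category E] {G : D ⥤ B}
    (hG : IsLinearFunctor k G) {K : E ⥤ D} {L : E ⥤ B} (h : K ⋙ G = L) {a b : E}
    {f : a ⟶ b} (hf : L.map f ≠ 0) : K.map f ≠ 0 := by
  subst h
  intro h0
  exact hf (by rw [Functor.comp_map, h0, hG.map_zero])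

theorem IsLinearFunctor.map_ne_zero_of_comp_eq_id {J Jinv : B ⥤ B} (hJ : IsLinearFunctor k J)
    (hJinv : J ⋙ Jinv = 𝟭 B) {a b : B} {f : a ⟶ b} (hf : f ≠ 0) : J.map f ≠ 0 := by
  have := Functor.Faithful.of_comp_eq hJinv
  rwa [← hJ.map_zero, Ne, J.map_injective.eq_iff]

end LinearFunctors

theorem IsConnectedKCat.forall_of_iff {E : Type*} [Category E] [Preadditive E]
    (hE : IsConnectedKCat E) {P : E → Prop}
    (hP : ∀ ⦃a b : E⦄ (f : a ⟶ b), f ≠ 0 → (P a ↔ P b)) {e₀ : E} (h₀ : P e₀) (e : E) :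
    P e := by
  suffices ∀ a b, Relation.EqvGen (fun a b : E => ∃ f : a ⟶ b, f ≠ 0) a b → (P a ↔ P b) from
    (this e₀ e (hE e₀ e)).1 h₀
  intro a b hab
  induction hab with
  | rel a b hab => obtain ⟨f, hf⟩ := hab; exact hP f hf
  | refl => exact Iff.rfl
  | symm _ _ _ ih => exact ih.symm
  | trans _ _ _ _ _ ih₁ ih₂ => exact ih₁.trans ih₂

section Coverings

open scoped Classical

variable {k : Type w} [CommRing k]
variable {D : Type u} [Category.{v} D] [Preadditive D] [CategoryTheory.Linear k D]
variable {B : Type u} [Category.{v} B] [Preadditive B] [CategoryTheory.Linear k B]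

theorem starOutHom_of {G : D ⥤ B} (hG : IsLinearFunctor k G) (x : D) (c : B)
    (y : {y : D // G.obj y = c}) (f : x ⟶ y.1) :
    starOutHom k G hG x c (DirectSum.of _ y f) = G.map f ≫ eqToHom y.2 := by
  simp [starOutHom]

theorem starInHom_of {G : D ⥤ B} (hG : IsLinearFunctor k G) (x : D) (c : B)
    (y : {y : D // G.obj y = c}) (f : y.1 ⟶ x) :
    starInHom k G hG x c (DirectSum.of _ y f) = eqToHom y.2.symm ≫ G.map f := by
  simp [starInHom]

variable {G : D ⥤ B}

theorem IsCovering.map_injective (hG : IsCovering k G) {x y : D} :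
    Function.Injective (G.map : (x ⟶ y) → (G.obj x ⟶ G.obj y)) := by
  obtain ⟨hlin, -, hout, -⟩ := hG
  intro f f' h
  apply DirectSum.of_injective (β := fun z : {z : D // G.obj z = G.obj y} => (x ⟶ z.1))
    ⟨y, rfl⟩
  apply (hout x (G.obj y)).1
  rw [starOutHom_of, starOutHom_of]
  simpa using h

theorem IsCovering.map_ne_zero (hG : IsCovering k G) {x y : D} {f : x ⟶ y} (hf : f ≠ 0) :
    G.map f ≠ 0 := by
  rwa [← hG.fst.map_zero, Ne, hG.map_injective.eq_iff]

theorem IsCovering.eq_of_map_comp_eqToHom_eq (hG : IsCovering k G) {x y y' : D}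
    {f : x ⟶ y} {f' : x ⟶ y'} (hf : f ≠ 0) (h : G.obj y = G.obj y')
    (hmap : G.map f ≫ eqToHom h = G.map f') : y = y' := by
  obtain ⟨hlin, -, hout, -⟩ := hG
  have hsingle : DirectSum.of (fun z : {z : D // G.obj z = G.obj y'} => (x ⟶ z.1)) ⟨y, h⟩ f
      = DirectSum.of _ ⟨y', rfl⟩ f' :=
    (hout x (G.obj y')).1 (by rw [starOutHom_of, starOutHom_of]; simpa using hmap)
  rcases (DFinsupp.single_eq_single_iff _ _ _ _).1 hsingle with ⟨hyy', -⟩ | ⟨hf0, -⟩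
  · exact congrArg Subtype.val hyy'
  · exact absurd hf0 hf

theorem IsCovering.eq_of_eqToHom_comp_map_eq (hG : IsCovering k G) {x y y' : D}
    {f : y ⟶ x} {f' : y' ⟶ x} (hf : f ≠ 0) (h : G.obj y = G.obj y')
    (hmap : eqToHom h.symm ≫ G.map f = G.map f') : y = y' := by
  obtain ⟨hlin, -, -, hin⟩ := hG
  have hsingle : DirectSum.of (fun z : {z : D // G.obj z = G.obj y'} => (z.1 ⟶ x)) ⟨y, h⟩ f
      = DirectSum.of _ ⟨y', rfl⟩ f' :=
    (hin x (G.obj y')).1 (by rw [starInHom_of, starInHom_of]; simpa using hmap)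
  rcases (DFinsupp.single_eq_single_iff _ _ _ _).1 hsingle with ⟨hyy', -⟩ | ⟨hf0, -⟩
  · exact congrArg Subtype.val hyy'
  · exact absurd hf0 hf

theorem IsCovering.functor_eq_of_obj_eq (hG : IsCovering k G) {E : Type*} [Category E]
    [Preadditive E] (hE : IsConnectedKCat E) {K K' : E ⥤ D}
    (hK : ∀ ⦃a b : E⦄ (f : a ⟶ b), f ≠ 0 → K.map f ≠ 0) (hKK' : K ⋙ G = K' ⋙ G) {e₀ : E}
    (h₀ : K.obj e₀ = K'.obj e₀) : K = K' := by
  have hobj (a : E) : G.obj (K.obj a) = G.obj (K'.obj a) := Functor.congr_obj hKK' a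
  have hmap {a b : E} (f : a ⟶ b) :
      G.map (K.map f) = eqToHom (hobj a) ≫ G.map (K'.map f) ≫ eqToHom (hobj b).symm := by
    simpa using Functor.congr_hom hKK' f
  have hobj_eq : ∀ e, K.obj e = K'.obj e := by
    refine hE.forall_of_iff (fun a b f hf => ⟨fun ha => ?_, fun hb => ?_⟩) h₀
    · exact hG.eq_of_map_comp_eqToHom_eq (f' := eqToHom ha ≫ K'.map f) (hK f hf) (hobj b)
        (by simp [hmap, eqToHom_map])
    · exact hG.eq_of_eqToHom_comp_map_eq (f' := K'.map f ≫ eqToHom hb.symm) (hK f hf) (hobj a)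
        (by simp [hmap, eqToHom_map])
  refine CategoryTheory.Functor.ext hobj_eq fun a b f => hG.map_injective ?_
  simp [hmap, eqToHom_map]

end Coverings

theorem galois_morphisms_torsor_under_aut (k : Type w) [CommRing k]
    {C : Type u} [Category.{v} C] [Preadditive C] [CategoryTheory.Linear k C]
    {B : Type u} [Category.{v} B] [Preadditive B] [CategoryTheory.Linear k B]
    {D : Type u} [Category.{v} D] [Preadditive D] [CategoryTheory.Linear k D]
    (F : C ⥤ B) (G : D ⥤ B) (hF : IsGaloisCovering k F) (hG : IsGaloisCovering k G)
    (H : C ⥤ D) (J : B ⥤ B) (hHJ : IsCoveringMorphism k F G H J) :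
    ∀ H' : C ⥤ D, IsLinearFunctor k H' → H' ⋙ G = F ⋙ J →
      ∃! g : D ⥤ D, MemAut1 k G g ∧ H ⋙ g = H' := by
  intro H' _ hH'
  obtain ⟨hFcov, hCconn, -⟩ := hF
  obtain ⟨hGcov, hDconn, b₀, htrans⟩ := hG
  obtain ⟨-, hJlin, ⟨Jinv, hJinv, -⟩, hJobj, hHG⟩ := hHJ
  obtain ⟨x₀, hx₀⟩ := hFcov.2.1 b₀
  have over_b₀ {K : C ⥤ D} (hK : K ⋙ G = F ⋙ J) : G.obj (K.obj x₀) = b₀ := by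
    rw [← Functor.comp_obj, hK, Functor.comp_obj, hJobj, hx₀]
  obtain ⟨g, hg, hgx₀⟩ := htrans _ _ (over_b₀ hHG) (over_b₀ hH')
  have hHgG : (H ⋙ g) ⋙ G = F ⋙ J := by rw [Functor.assoc, hg.2.2, hHG]
  have hHg : H ⋙ g = H' :=
    hGcov.functor_eq_of_obj_eq hCconn
      (fun _ _ _ hf => hGcov.fst.map_ne_zero_of_comp_eq hHgG
        (hJlin.map_ne_zero_of_comp_eq_id hJinv (hFcov.map_ne_zero hf)))
      (hHgG.trans hH'.symm) hgx₀
  refine ⟨g, ⟨hg, hHg⟩, fun g' ⟨hg', hHg'⟩ => ?_⟩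
  exact hGcov.functor_eq_of_obj_eq hDconn
    (fun _ _ _ hf => hGcov.fst.map_ne_zero_of_comp_eq hg'.2.2 (hGcov.map_ne_zero hf))
    (hg'.2.2.trans hg.2.2.symm) (Functor.congr_obj (hHg'.trans hHg.symm) x₀)
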